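/- Let A be a Banach algebra, φ a character on A with I_φ = ker φ satisfying that the closed linear span of A·I_φ equals I_φ. Let m ∈ A** satisfy ⟨m, f·(ab)⟩ = φ(b)⟨m, f·a⟩ for all f ∈ A*, a, b ∈ A (e.g., if m is a topologically left invariant φ-mean restricted appropriately). Then for every f ∈ A*, the functional m·f defined by ⟨m·f, a⟩ = ⟨m, f·a⟩ vanishes on I_φ, and hence ⟨m, f·(ab)⟩ = ⟨m, f·(ba)⟩ for all a, b ∈ A. -/

import Mathlib

open scoped Topology
open Filter

noncomputable def fdot {A : Type*} [NonUnitalNormedRing A] [NormedSpace ℂ A]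
    [IsScalarTower ℂ A A] [SMulCommClass ℂ A A] (f : A →L[ℂ] ℂ) (a : A) : A →L[ℂ] ℂ :=
  f.comp (ContinuousLinearMap.mul ℂ A a)

section

variable {𝕜 A : Type*} [NontriviallyNormedField 𝕜] [NonUnitalNormedRing A] [NormedSpace 𝕜 A]

theorem apply_eq_zero_of_ker_eq_closure_span_mul (φ T : A →L[𝕜] 𝕜)
    (hI : (Submodule.span 𝕜 {x : A | ∃ a b : A, φ b = 0 ∧ x = a * b}).topologicalClosure
        = LinearMap.ker (φ : A →ₗ[𝕜] 𝕜))
    (hT : ∀ a b : A, φ b = 0 → T (a * b) = 0) {x : A} (hx : φ x = 0) : T x = 0 := by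
  have hspan : Submodule.span 𝕜 {x : A | ∃ a b : A, φ b = 0 ∧ x = a * b}
      ≤ LinearMap.ker (T : A →ₗ[𝕜] 𝕜) := by
    rw [Submodule.span_le]
    rintro _ ⟨a, b, hb, rfl⟩
    exact hT a b hb
  have hx' : x ∈ LinearMap.ker (φ : A →ₗ[𝕜] 𝕜) := hx
  rw [← hI] at hx'
  exact Submodule.topologicalClosure_minimal _ hspan T.isClosed_ker hx'

theorem map_mul_sub_mul_comm_eq_zero (φ : A →L[𝕜] 𝕜) (hφmul : ∀ a b : A, φ (a * b) = φ a * φ b)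
    (a b : A) : φ (a * b - b * a) = 0 := by
  rw [map_sub, hφmul, hφmul, mul_comm, sub_self]

end

section

variable {A : Type*} [NonUnitalNormedRing A] [NormedSpace ℂ A]
  [IsScalarTower ℂ A A] [SMulCommClass ℂ A A]

/-- The functional `m · f ∈ A*`, `⟨m · f, a⟩ = ⟨m, f · a⟩`. -/
noncomputable def bidualDot (m : (A →L[ℂ] ℂ) →L[ℂ] ℂ) (f : A →L[ℂ] ℂ) : A →L[ℂ] ℂ :=
  m.comp ((ContinuousLinearMap.compL ℂ A A ℂ f).comp (ContinuousLinearMap.mul ℂ A))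

@[simp]
theorem bidualDot_apply (m : (A →L[ℂ] ℂ) →L[ℂ] ℂ) (f : A →L[ℂ] ℂ) (a : A) :
    bidualDot m f a = m (fdot f a) :=
  rfl

end

theorem stmt5 {A : Type*} [NonUnitalNormedRing A] [NormedSpace ℂ A]
    [IsScalarTower ℂ A A] [SMulCommClass ℂ A A]
    (φ : A →L[ℂ] ℂ) (hφmul : ∀ a b : A, φ (a * b) = φ a * φ b)
    (hI : (Submodule.span ℂ {x : A | ∃ a b : A, φ b = 0 ∧ x = a * b}).topologicalClosure
        = LinearMap.ker (φ : A →ₗ[ℂ] ℂ))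
    (m : (A →L[ℂ] ℂ) →L[ℂ] ℂ)
    (hm : ∀ (f : A →L[ℂ] ℂ) (a b : A), m (fdot f (a * b)) = φ b * m (fdot f a)) :
    (∀ (f : A →L[ℂ] ℂ) (a : A), φ a = 0 → m (fdot f a) = 0) ∧
    (∀ (f : A →L[ℂ] ℂ) (a b : A), m (fdot f (a * b)) = m (fdot f (b * a))) := by
  have vanish : ∀ (f : A →L[ℂ] ℂ) (a : A), φ a = 0 → m (fdot f a) = 0 := by
    intro f a ha
    have hprod : ∀ a b : A, φ b = 0 → bidualDot m f (a * b) = 0 := by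
      intro a b hb
      rw [bidualDot_apply, hm, hb, zero_mul]
    simpa using apply_eq_zero_of_ker_eq_closure_span_mul φ (bidualDot m f) hI hprod ha
  refine ⟨vanish, fun f a b => ?_⟩
  have hcomm := vanish f _ (map_mul_sub_mul_comm_eq_zero φ hφmul a b)
  rwa [← bidualDot_apply, map_sub, sub_eq_zero] at hcomm
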